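/- arXiv:0808.1483 — 5 statements merged into one kernel-verified Lean document; each statement's English description precedes it below -/
import Mathlib

section
/- Let R be a commutative ring of prime characteristic p and let H be an x-torsion-free left R[x,f]-module. Then the ideal b = (0 :_R H) = { r ∈ R : r·H = 0 } is a radical ideal of R. -/
/-- If `H` is an `x`-torsion-free left `R[x,f]`-module, then the annihilator
`(0 :_R H)` is a radical ideal of `R`. -/
theorem stmt3 {R : Type*} [CommRing R] (p : ℕ) [Fact p.Prime] [CharP R p]
    {H : Type*} [AddCommGroup H] [Module R H] (θ : H →+ H)
    (hθ : ∀ (r : R) (h : H), θ (r • h) = r ^ p • θ h)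
    (htf : ∀ h : H, θ h = 0 → h = 0) :
    (Module.annihilator R H).IsRadical := by
  rw [Ideal.isRadical_iff_pow_one_lt p (Fact.out : p.Prime).one_lt]
  intro r hr
  rw [Module.mem_annihilator] at hr ⊢
  intro h
  apply htf
  rw [hθ, hr]
end

section
/- Let R be a commutative Noetherian local ring with maximal ideal m of prime characteristic p, and suppose E := E_R(R/m) admits a structure of x-torsion-free left R[x,f]-module (an injective additive map θ : E → E with θ(re) = r^p θ(e)). Then R is F-pure: for every R-module N, the map N → (f_*R) ⊗_R N, n ↦ 1 ⊗ n, is injective. -/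
open TensorProduct

/-- `R` viewed as a (right) `R`-module via the Frobenius `f : r ↦ r^p`, i.e. `f_* R`:
the underlying additive group is `R`, and `r • a = r^p * a`. -/
def FrobRestrict (R : Type*) [CommRing R] (p : ℕ) [Fact p.Prime] [CharP R p] : Type _ := R

instance (R : Type*) [CommRing R] (p : ℕ) [Fact p.Prime] [CharP R p] :
    AddCommGroup (FrobRestrict R p) := inferInstanceAs (AddCommGroup R)

instance (R : Type*) [CommRing R] (p : ℕ) [Fact p.Prime] [CharP R p] :
    Module R (FrobRestrict R p) := Module.compHom R (frobenius R p)

noncomputable instance (R : Type*) [CommRing R] (p : ℕ) [Fact p.Prime] [CharP R p] :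
    One (FrobRestrict R p) := inferInstanceAs (One R)

/-!
Every nonzero `z : N` is detected by a map `φ : N → E`: the map `R ∙ z ≅ R ⧸ ann z → R ⧸ m ↪ E`
extends to `N` by injectivity of `E`. (Applying injectivity to modules `N` in arbitrary universes
needs `R` to be small relative to `E`; this holds because `R ↪ ∏ₙ R ⧸ mⁿ` by Krull's intersection
theorem and each `R ⧸ mⁿ` is built from finitely many copies of `R ⧸ m ↪ E`.)
Hence `1 ⊗ z = 0` forces `1 ⊗ φ z = 0`, and it remains to see that `e ↦ 1 ⊗ e` is injective on `E`:
composing it with `a ⊗ e ↦ a • θ e` gives the injective map `θ`.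
-/

universe u v w

section Smallness

variable {R : Type u} [CommRing R]

theorem Module.IsTorsionBySet.small {M : Type w} [AddCommGroup M] [Module R M] [Module.Finite R M]
    {I : Ideal R} [Small.{v} (R ⧸ I)] (hM : Module.IsTorsionBySet R M I) : Small.{v} M :=
  letI := hM.module
  haveI : Module.Finite (R ⧸ I) M := Module.Finite.of_restrictScalars_finite R _ _
  Module.Finite.small (R ⧸ I) M

theorem LinearMap.small_of_small_ker {M : Type w} {N : Type*} [AddCommGroup M] [Module R M]
    [AddCommGroup N] [Module R N] (f : M →ₗ[R] N) [Small.{v} (LinearMap.ker f)] [Small.{v} N] :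
    Small.{v} M := by
  let s : N → M := Function.invFun f
  have hs : ∀ x, f (s (f x)) = f x := fun x => Function.invFun_eq ⟨x, rfl⟩
  refine small_of_injective (f := fun x : M =>
    ((⟨x - s (f x), by simp [hs]⟩ : LinearMap.ker f), f x)) ?_
  intro x y hxy
  simp only [Prod.mk.injEq, Subtype.mk.injEq] at hxy
  obtain ⟨h1, h2⟩ := hxy
  rw [h2] at h1
  simpa using h1

theorem Ideal.small_quotient_pow [IsNoetherianRing R] (I : Ideal R) [Small.{v} (R ⧸ I)] :
    ∀ n : ℕ, Small.{v} (R ⧸ I ^ n)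
  | 0 => by
    have : Subsingleton (R ⧸ I ^ 0) := by simp
    infer_instance
  | n + 1 => by
    have := Ideal.small_quotient_pow I n
    let π : R ⧸ I ^ (n + 1) →ₗ[R] R ⧸ I ^ n := Submodule.factor (Ideal.pow_le_pow_right n.le_succ)
    have hker : Module.IsTorsionBySet R (LinearMap.ker π) I := by
      rintro ⟨x, hx⟩ ⟨r, hr⟩
      obtain ⟨y, rfl⟩ := Submodule.Quotient.mk_surjective _ x
      have hy : y ∈ I ^ n := Ideal.Quotient.eq_zero_iff_mem.mp (by simpa [π] using hx)
      ext
      exact Ideal.Quotient.eq_zero_iff_mem.mpr (pow_succ' I n ▸ Ideal.mul_mem_mul hr hy)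
    have := hker.small
    exact π.small_of_small_ker

theorem IsLocalRing.small_of_small_residueField [IsNoetherianRing R] [IsLocalRing R]
    [Small.{v} (IsLocalRing.ResidueField R)] : Small.{v} R := by
  have : Small.{v} (R ⧸ IsLocalRing.maximalIdeal R) := ‹Small.{v} (IsLocalRing.ResidueField R)›
  have := (IsLocalRing.maximalIdeal R).small_quotient_pow
  have hinj : Function.Injective
      (RingHom.pi fun n : ℕ => Ideal.Quotient.mk (IsLocalRing.maximalIdeal R ^ n)) := by
    rw [RingHom.injective_iff_ker_eq_bot, Pi.ker_ringHom]
    simpa using Ideal.iInf_pow_eq_bot_of_isLocalRing _ (IsLocalRing.maximalIdeal.isMaximal R).ne_top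
  exact small_of_injective hinj

end Smallness

theorem Module.Baer.exists_linearMap_apply_eq {R Q N : Type*} [CommRing R] [AddCommGroup Q]
    [Module R Q] [AddCommGroup N] [Module R N] (hQ : Module.Baer R Q) {z : N} {e : Q}
    (h : Ideal.torsionOf R N z ≤ Ideal.torsionOf R Q e) :
    ∃ φ : N →ₗ[R] Q, φ z = e := by
  let g : (R ∙ z) →ₗ[R] Q := (Ideal.torsionOf R N z).liftQ (LinearMap.toSpanSingleton R Q e) h
    ∘ₗ (Ideal.quotTorsionOfEquivSpanSingleton R N z).symm
  obtain ⟨φ, hφ⟩ := hQ.extension_property (R ∙ z).subtype (Submodule.injective_subtype _) g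
  have h1 : (Ideal.quotTorsionOfEquivSpanSingleton R N z).symm
      ⟨z, Submodule.mem_span_singleton_self z⟩ = Submodule.Quotient.mk 1 := by
    rw [LinearEquiv.symm_apply_eq, Ideal.quotTorsionOfEquivSpanSingleton_apply_mk, one_smul]
  refine ⟨φ, ?_⟩
  have := LinearMap.congr_fun hφ ⟨z, Submodule.mem_span_singleton_self z⟩
  simp only [g, LinearMap.comp_apply, LinearEquiv.coe_coe, h1, Submodule.subtype_apply] at this
  exact this.trans (one_smul R e)

theorem Module.Injective.exists_linearMap_apply_ne_zero {R : Type u} [CommRing R]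
    [IsNoetherianRing R] [IsLocalRing R] {E : Type v} [AddCommGroup E] [Module R E]
    (hinj : Module.Injective R E) (S : Submodule R E) (σ : S ≃ₗ[R] IsLocalRing.ResidueField R)
    {N : Type w} [AddCommGroup N] [Module R N] {z : N} (hz : z ≠ 0) :
    ∃ φ : N →ₗ[R] E, φ z ≠ 0 := by
  have : Small.{v} (IsLocalRing.ResidueField R) := small_map σ.symm.toEquiv
  have : Small.{v} R := IsLocalRing.small_of_small_residueField
  let e₀ : E := σ.symm 1
  have he₀ : IsLocalRing.maximalIdeal R ≤ Ideal.torsionOf R E e₀ := fun r hr => by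
    have : r • (1 : IsLocalRing.ResidueField R) = 0 := by
      simpa [Algebra.smul_def] using (IsLocalRing.residue_eq_zero_iff r).mpr hr
    simp [e₀, ← Submodule.coe_smul, ← map_smul, this]
  have hz' : Ideal.torsionOf R N z ≤ IsLocalRing.maximalIdeal R :=
    IsLocalRing.le_maximalIdeal (by rwa [Ne, Ideal.torsionOf_eq_top_iff])
  obtain ⟨φ, hφ⟩ := (Module.Baer.of_injective hinj).exists_linearMap_apply_eq (hz'.trans he₀)
  exact ⟨φ, by simp [hφ, e₀]⟩

theorem TensorProduct.mk_injective_of_separating {R F E N : Type*} [CommRing R]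
    [AddCommGroup F] [Module R F] [AddCommGroup E] [Module R E] [AddCommGroup N] [Module R N]
    (a : F) (hE : Function.Injective (fun e : E => a ⊗ₜ[R] e))
    (hsep : ∀ z : N, z ≠ 0 → ∃ φ : N →ₗ[R] E, φ z ≠ 0) :
    Function.Injective (fun n : N => a ⊗ₜ[R] n) := by
  refine (injective_iff_map_eq_zero (TensorProduct.mk R F N a)).2 fun z hz => ?_
  by_contra hz0
  obtain ⟨φ, hφ⟩ := hsep z hz0
  refine hφ (hE ?_)
  simpa using congrArg (LinearMap.lTensor F φ) hz

namespace FrobRestrict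

variable {R : Type u} [CommRing R] {p : ℕ} [Fact p.Prime] [CharP R p]
  {E : Type v} [AddCommGroup E] [Module R E]

/-- `a ⊗ e ↦ a • θ e`, well defined because `θ` is `p`-linear:
`(s ^ p * a) • θ e = a • θ (s • e)`. -/
def contract (θ : E →+ E) (hθ : ∀ (r : R) (e : E), θ (r • e) = r ^ p • θ e) :
    FrobRestrict R p ⊗[R] E →+ E :=
  TensorProduct.liftAddHom (((smulAddHom R E).flip.comp θ).flip : FrobRestrict R p →+ E →+ E)
    fun s a e => by
      change (frobenius R p s * (show R from a)) • θ e = (show R from a) • θ (s • e)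
      rw [hθ, frobenius_def, mul_smul, smul_comm]

theorem contract_one_tmul (θ : E →+ E) (hθ : ∀ (r : R) (e : E), θ (r • e) = r ^ p • θ e)
    (e : E) : contract θ hθ ((1 : FrobRestrict R p) ⊗ₜ e) = θ e :=
  (TensorProduct.liftAddHom_tmul _ _ _ _).trans (one_smul R (θ e))

theorem one_tmul_injective (θ : E →+ E) (hθ : ∀ (r : R) (e : E), θ (r • e) = r ^ p • θ e)
    (htf : Function.Injective θ) :
    Function.Injective (fun e : E => (1 : FrobRestrict R p) ⊗ₜ[R] e) := fun e e' h =>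
  htf <| by simpa only [contract_one_tmul] using congrArg (contract θ hθ) h

end FrobRestrict

theorem stmt10_general (R : Type*) [CommRing R] [IsNoetherianRing R] [IsLocalRing R]
    (p : ℕ) [Fact p.Prime] [CharP R p]
    {E : Type*} [AddCommGroup E] [Module R E]
    (hinj : Module.Injective R E)
    (S : Submodule R E) (hS : Nonempty (S ≃ₗ[R] IsLocalRing.ResidueField R))
    (θ : E →+ E) (hθ : ∀ (r : R) (e : E), θ (r • e) = r ^ p • θ e)
    (htf : Function.Injective θ) :
    ∀ (N : Type _) [AddCommGroup N] [Module R N],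
      Function.Injective (fun n : N => (1 : FrobRestrict R p) ⊗ₜ[R] n) := by
  intro N _ _
  obtain ⟨σ⟩ := hS
  exact TensorProduct.mk_injective_of_separating _ (FrobRestrict.one_tmul_injective θ hθ htf)
    fun z hz => hinj.exists_linearMap_apply_ne_zero S σ hz

/-- Let `(R,m)` be a Noetherian local ring of prime characteristic `p`, and suppose the
injective envelope `E` of `R/m` (encoded: injective `R`-module with an essential copy
`S` of the residue field) admits an `x`-torsion-free left `R[x,f]`-module structure,
i.e. an injective additive map `θ : E → E` with `θ(r•e) = r^p • θ e`.  Then `R` is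
`F`-pure: for every `R`-module `N` the map `N → (f_* R) ⊗_R N`, `n ↦ 1 ⊗ n`, is
injective. -/
theorem stmt10 (R : Type*) [CommRing R] [IsNoetherianRing R] [IsLocalRing R]
    (p : ℕ) [Fact p.Prime] [CharP R p]
    {E : Type*} [AddCommGroup E] [Module R E]
    (hinj : Module.Injective R E)
    (S : Submodule R E) (hS : Nonempty (S ≃ₗ[R] IsLocalRing.ResidueField R))
    (hess : ∀ N : Submodule R E, N ≠ ⊥ → N ⊓ S ≠ ⊥)
    (θ : E →+ E) (hθ : ∀ (r : R) (e : E), θ (r • e) = r ^ p • θ e)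
    (htf : Function.Injective θ) :
    ∀ (N : Type _) [AddCommGroup N] [Module R N],
      Function.Injective (fun n : N => (1 : FrobRestrict R p) ⊗ₜ[R] n) :=
  stmt10_general R p hinj S hS θ hθ htf
end

section
/- Let R be a commutative ring of prime characteristic p, W an x-torsion-free graded left R[x,f]-module with components in degrees ≥ b ≥ 1, and W' = ext(W; g_1,…,g_t; 1) its 1-place extension by g_1,…,g_t ∈ W_b. If b is a radical ideal of R such that b·R[x,f] is the graded annihilator of some R[x,f]-submodule of W', then b·R[x,f] is also the graded annihilator of an R[x,f]-submodule of W; hence I(W') = I(W). -/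
/-- Iterated `x`-action on an `ℕ`-graded left `R[x,f]`-module. -/
def xIter {M : ℕ → Type*} [∀ n, AddCommMonoid (M n)] (x : ∀ n, M n →+ M (n + 1))
    (n : ℕ) : (k : ℕ) → M n → M (n + k)
  | 0, m => m
  | k + 1, m => x (n + k) (xIter x n k m)

/-- An `ℕ`-graded left `R[x,f]`-module is `x`-torsion-free if no nonzero homogeneous
element is annihilated by a power of `x`. -/
def IsXTorsionFree {M : ℕ → Type*} [∀ n, AddCommMonoid (M n)]
    (x : ∀ n, M n →+ M (n + 1)) : Prop :=
  ∀ (n : ℕ) (m : M n), (∃ k : ℕ, 1 ≤ k ∧ xIter x n k m = 0) → m = 0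

/-- `f^{-1}(K)`, where `K = {(r_1,…,r_t) : Σ r_i g_i = 0}` and `f` is the componentwise
Frobenius on `R^t`; concretely `{v : Σ (v i)^p • g i = 0}`. -/
def frobPreK {R : Type*} [CommRing R] (p : ℕ) [Fact p.Prime] [CharP R p]
    {t : ℕ} {Wb : Type*} [AddCommGroup Wb] [Module R Wb] (g : Fin t → Wb) :
    Submodule R (Fin t → R) where
  carrier := {v | ∑ i, (v i) ^ p • g i = 0}
  zero_mem' := by
    simp [zero_pow (Nat.Prime.ne_zero (Fact.out : p.Prime))]
  add_mem' := by
    intro a b ha hb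
    simp only [Set.mem_setOf_eq, Pi.add_apply] at *
    simp only [add_pow_char, add_smul, Finset.sum_add_distrib, ha, hb, add_zero]
  smul_mem' := by
    intro c v hv
    simp only [Set.mem_setOf_eq, Pi.smul_apply, smul_eq_mul] at *
    simp only [mul_pow, mul_smul, ← Finset.smul_sum, hv, smul_zero]

/-- The `x`-action on the new degree-`(b-1)` component of the `1`-place extension
`ext(W; g_1,…,g_t; 1)`: it sends `(r_i) + f^{-1}(K)` to `Σ r_i^p g_i ∈ W_b`. -/
def extX (R : Type*) [CommRing R] (p : ℕ) [Fact p.Prime] [CharP R p]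
    {t : ℕ} {Wb : Type*} [AddCommGroup Wb] [Module R Wb] (g : Fin t → Wb) :
    ((Fin t → R) ⧸ frobPreK (R := R) p g) → Wb := fun q =>
  Quotient.liftOn' q (fun v => ∑ i, (v i) ^ p • g i) (by
    intro a c hac
    have h : a - c ∈ frobPreK p g :=
      (Submodule.quotientRel_def _).mp (Quotient.eq''.mp (Quotient.sound' hac))
    have h' : ∑ i, ((a - c) i) ^ p • g i = 0 := h
    simp only [Pi.sub_apply, sub_pow_char, sub_smul, Finset.sum_sub_distrib] at h'
    exact sub_eq_zero.mp h')

/-- Let `W` be an `x`-torsion-free graded left `R[x,f]`-module with components in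
degrees `≥ b ≥ 1` and `W' = ext(W; g_1,…,g_t; 1)` its `1`-place extension.  If `bb` is
a radical ideal of `R` such that `bb·R[x,f]` is the graded annihilator of some
`R[x,f]`-submodule of `W'`, then it is also the graded annihilator of an
`R[x,f]`-submodule of `W`; hence `I(W') = I(W)`. -/
theorem stmt14 {R : Type*} [CommRing R] (p : ℕ) [Fact p.Prime] [CharP R p]
    {W : ℕ → Type*} [∀ n, AddCommGroup (W n)] [∀ n, Module R (W n)]
    (x : ∀ n, W n →+ W (n + 1))
    (hx : ∀ (n : ℕ) (r : R) (m : W n), x n (r • m) = r ^ p • x n m)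
    (b : ℕ) (hb : 1 ≤ b) (hlow : ∀ n < b, ∀ m : W n, m = 0)
    (t : ℕ) (g : Fin t → W b)
    (htf : IsXTorsionFree x)
    (bb : Ideal R) (hrad : bb.IsRadical)
    (hbb : ∃ (Q : Submodule R ((Fin t → R) ⧸ frobPreK p g)) (N : ∀ n, Submodule R (W n)),
      (∀ n, ∀ m ∈ N n, x n m ∈ N (n + 1)) ∧ (∀ q ∈ Q, extX R p g q ∈ N b) ∧
      (∀ r : R, r ∈ bb ↔ ((∀ q ∈ Q, r • q = 0) ∧ ∀ n, ∀ m ∈ N n, r • m = 0))) :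
    (∃ N : ∀ n, Submodule R (W n), (∀ n, ∀ m ∈ N n, x n m ∈ N (n + 1)) ∧
      ∀ r : R, r ∈ bb ↔ ∀ n, ∀ m ∈ N n, r • m = 0) ∧
    {c : Ideal R | ∃ (Q : Submodule R ((Fin t → R) ⧸ frobPreK p g))
        (N : ∀ n, Submodule R (W n)),
      (∀ n, ∀ m ∈ N n, x n m ∈ N (n + 1)) ∧ (∀ q ∈ Q, extX R p g q ∈ N b) ∧
      (∀ r : R, r ∈ c ↔ ((∀ q ∈ Q, r • q = 0) ∧ ∀ n, ∀ m ∈ N n, r • m = 0))} =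
    {c : Ideal R | ∃ N : ∀ n, Submodule R (W n),
      (∀ n, ∀ m ∈ N n, x n m ∈ N (n + 1)) ∧
      (∀ r : R, r ∈ c ↔ ∀ n, ∀ m ∈ N n, r • m = 0)} := by
  classical
  -- Key: if r kills all of N (with Q mapping into N b via extX), then r kills Q.
  have key : ∀ (Q : Submodule R ((Fin t → R) ⧸ frobPreK p g)) (N : ∀ n, Submodule R (W n)),
      (∀ q ∈ Q, extX R p g q ∈ N b) → ∀ r : R,
      (∀ n, ∀ m ∈ N n, r • m = 0) → ∀ q ∈ Q, r • q = 0 := by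
    intro Q N hQN r hkill q hq
    obtain ⟨v, rfl⟩ := Submodule.Quotient.mk_surjective _ q
    have hval : extX R p g (Submodule.Quotient.mk v) = ∑ i, (v i) ^ p • g i := rfl
    have hmem : (∑ i, (v i) ^ p • g i) ∈ N b := hval ▸ hQN _ hq
    have hz : r ^ p • (∑ i, (v i) ^ p • g i) = 0 := by
      have := hkill b _ hmem
      calc r ^ p • (∑ i, (v i) ^ p • g i)
          = r ^ (p - 1) • (r • ∑ i, (v i) ^ p • g i) := by
            rw [← mul_smul, ← pow_succ, Nat.sub_add_cancel (Fact.out : p.Prime).one_lt.le]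
        _ = 0 := by rw [this, smul_zero]
    have hK : r • v ∈ frobPreK p g := by
      show ∑ i, ((r • v) i) ^ p • g i = 0
      simp only [Pi.smul_apply, smul_eq_mul, mul_pow, mul_smul]
      rw [← Finset.smul_sum]
      exact hz
    rw [← Submodule.Quotient.mk_smul]
    exact (Submodule.Quotient.mk_eq_zero _).mpr hK
  obtain ⟨Q, N, hN, hQN, hchar⟩ := hbb
  constructor
  · refine ⟨N, hN, fun r => ?_⟩
    constructor
    · intro hr
      exact ((hchar r).mp hr).2
    · intro hkill
      exact (hchar r).mpr ⟨key Q N hQN r hkill, hkill⟩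
  · ext c
    simp only [Set.mem_setOf_eq]
    constructor
    · rintro ⟨Q', N', hN', hQN', hc⟩
      refine ⟨N', hN', fun r => ?_⟩
      constructor
      · intro hr; exact ((hc r).mp hr).2
      · intro hkill; exact (hc r).mpr ⟨key Q' N' hQN' r hkill, hkill⟩
    · rintro ⟨N', hN', hc⟩
      refine ⟨⊥, N', hN', ?_, fun r => ?_⟩
      · intro q hq
        rw [Submodule.mem_bot] at hq
        subst hq
        have : extX R p g (0 : (Fin t → R) ⧸ frobPreK p g)
            = ∑ i, ((0 : Fin t → R) i) ^ p • g i := rfl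
        rw [this]
        simp only [Pi.zero_apply, zero_pow (Fact.out : p.Prime).ne_zero, zero_smul,
          Finset.sum_const_zero]
        exact (N' b).zero_mem
      · constructor
        · intro hr
          refine ⟨fun q hq => ?_, (hc r).mp hr⟩
          rw [Submodule.mem_bot] at hq
          subst hq; simp
        · intro ⟨_, hkill⟩
          exact (hc r).mpr hkill
end

section
/- Let R be a commutative Noetherian local ring with maximal ideal m of prime characteristic p, with completion R̂. Let E = E_R(R/m), and suppose E is a left R[x,f]-module. Then the x-action on E is R̂-semilinear: x·(r̂·e) = r̂^p·(x·e) for all r̂ ∈ R̂ and e ∈ E, where E carries its natural R̂-module structure; hence a subset of E is an R[x,f]-submodule iff it is an R̂[x,f]-submodule. -/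
lemma aux_mono {R S : Type*} [CommRing R] [CommRing S] (φ : R →+* S) (I : Ideal R)
    {t T : ℕ} (h : t ≤ T) : Ideal.map φ (I ^ T) ≤ Ideal.map φ (I ^ t) :=
  Ideal.map_mono (Ideal.pow_le_pow_right h)

/-- Let `(R,m)` be a Noetherian local ring of prime characteristic `p` and let
`φ : R → S` be its completion `R̂` (encoded abstractly: `φ` has dense image in the sense
that every `s ∈ S` is congruent to an element of `R` modulo each `m^t S`).  Let `E` be
the injective envelope `E_R(R/m)` carrying its natural `S = R̂`-module structure, so that
every element of `E` is killed by `m^t S` for some `t`.  If `θ : E → E` is a left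
`R[x,f]`-module structure (`θ(φ(r) • e) = φ(r)^p • θ e`), then `θ` is automatically
`R̂`-semilinear: `θ(s • e) = s^p • θ e` for all `s ∈ S`; consequently an additive
subgroup of `E` closed under the `R`-action and `θ` is closed under the `S`-action and
`θ`, and conversely. -/
theorem stmt15 {R : Type*} [CommRing R] [IsNoetherianRing R] [IsLocalRing R]
    (p : ℕ) [Fact p.Prime] [CharP R p]
    {S : Type*} [CommRing S] (φ : R →+* S)
    (hdense : ∀ (s : S) (t : ℕ), ∃ r : R,
      s - φ r ∈ Ideal.map φ ((IsLocalRing.maximalIdeal R) ^ t))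
    {E : Type*} [AddCommGroup E] [Module S E]
    (hart : ∀ e : E, ∃ t : ℕ,
      ∀ a ∈ Ideal.map φ ((IsLocalRing.maximalIdeal R) ^ t), a • e = 0)
    (θ : E →+ E) (hθ : ∀ (r : R) (e : E), θ (φ r • e) = (φ r) ^ p • θ e) :
    (∀ (s : S) (e : E), θ (s • e) = s ^ p • θ e) ∧
    ∀ A : AddSubgroup E,
      (((∀ (r : R), ∀ e ∈ A, φ r • e ∈ A) ∧ ∀ e ∈ A, θ e ∈ A) ↔
        ((∀ (s : S), ∀ e ∈ A, s • e ∈ A) ∧ ∀ e ∈ A, θ e ∈ A)) := by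
  have key : ∀ (s : S) (e : E), ∃ r : R, s • e = φ r • e ∧ s ^ p • θ e = (φ r) ^ p • θ e := by
    intro s e
    obtain ⟨t, ht⟩ := hart e
    obtain ⟨t', ht'⟩ := hart (θ e)
    obtain ⟨r, hr⟩ := hdense s (max t t')
    refine ⟨r, ?_, ?_⟩
    · have h1 : (s - φ r) • e = 0 :=
        ht _ (aux_mono φ _ (le_max_left t t') hr)
      rw [sub_smul, sub_eq_zero] at h1
      exact h1
    · have hdvd : s - φ r ∣ s ^ p - (φ r) ^ p := sub_dvd_pow_sub_pow s (φ r) p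
      obtain ⟨c, hc⟩ := hdvd
      have hmem : s ^ p - (φ r) ^ p ∈ Ideal.map φ ((IsLocalRing.maximalIdeal R) ^ t') := by
        rw [hc]
        exact Ideal.mul_mem_right _ _ (aux_mono φ _ (le_max_right t t') hr)
      have h2 : (s ^ p - (φ r) ^ p) • θ e = 0 := ht' _ hmem
      rw [sub_smul, sub_eq_zero] at h2
      exact h2
  have main : ∀ (s : S) (e : E), θ (s • e) = s ^ p • θ e := by
    intro s e
    obtain ⟨r, h1, h2⟩ := key s e
    rw [h1, hθ, h2]
  refine ⟨main, fun A => ⟨fun ⟨hR, hT⟩ => ⟨fun s e he => ?_, hT⟩,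
    fun ⟨hS, hT⟩ => ⟨fun r e he => hS (φ r) e he, hT⟩⟩⟩
  obtain ⟨r, h1, _⟩ := key s e
  rw [h1]
  exact hR r e he
end

section
/- Let R be a commutative ring of prime characteristic p, H a left R[x,f]-module, and define HSL(H) as the least e ∈ ℕ∪{0} with x^e·Γ_x(H) = 0 (or ∞ if none exists). For a nonempty family (H^(λ)) of ℕ-graded left R[x,f]-modules and H = ⊕_n ∏_λ H^(λ)_n with componentwise x-action, one has HSL(H) = sup_λ HSL(H^(λ)). -/
open scoped Classical

/-- `HSL(H)` is the least `e` with `x^e · Γ_x(H) = 0` (where `Γ_x(H)` is the set of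
homogeneous elements annihilated by some power of `x`), or `∞` if no such `e` exists. -/
noncomputable def HSL {M : ℕ → Type*} [∀ n, AddCommMonoid (M n)]
    (x : ∀ n, M n →+ M (n + 1)) : ℕ∞ :=
  sInf {e : ℕ∞ | ∃ e' : ℕ, e = (e' : ℕ∞) ∧
    ∀ (n : ℕ) (m : M n), (∃ k : ℕ, 1 ≤ k ∧ xIter x n k m = 0) → xIter x n e' m = 0}

/-- The componentwise `x`-action on the graded module `H` with `H_n = ∏_λ H^(λ)_n`. -/
def piX {Λ : Type*} {M : Λ → ℕ → Type*} [∀ l n, AddCommMonoid (M l n)]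
    (x : ∀ l n, M l n →+ M l (n + 1)) (n : ℕ) :
    (∀ l, M l n) →+ ∀ l, M l (n + 1) where
  toFun g l := x l n (g l)
  map_zero' := by funext l; simp
  map_add' g h := by funext l; simp


lemma xIter_zero {M : ℕ → Type*} [∀ n, AddCommMonoid (M n)] (x : ∀ n, M n →+ M (n + 1))
    (n k : ℕ) : xIter x n k (0 : M n) = 0 := by
  induction k with
  | zero => rfl
  | succ k ih => show x (n + k) (xIter x n k 0) = 0; rw [ih, map_zero]

lemma xIter_le {M : ℕ → Type*} [∀ n, AddCommMonoid (M n)] (x : ∀ n, M n →+ M (n + 1))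
    {n k e : ℕ} (hke : k ≤ e) {m : M n} (h : xIter x n k m = 0) : xIter x n e m = 0 := by
  obtain ⟨d, rfl⟩ := Nat.exists_eq_add_of_le hke
  clear hke
  induction d with
  | zero => exact h
  | succ d ih => show x (n + (k + d)) (xIter x n (k + d) m) = 0; rw [ih, map_zero]

lemma xIter_pi {Λ : Type*} {M : Λ → ℕ → Type*} [∀ l n, AddCommMonoid (M l n)]
    (x : ∀ l n, M l n →+ M l (n + 1)) (n k : ℕ) (g : ∀ l, M l n) (l : Λ) :
    xIter (piX x) n k g l = xIter (x l) n k (g l) := by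
  induction k with
  | zero => rfl
  | succ k ih =>
    show piX x (n + k) (xIter (piX x) n k g) l = x l (n + k) (xIter (x l) n k (g l))
    rw [← ih]; rfl

/-- For a nonempty family `(H^(λ))` of `ℕ`-graded left `R[x,f]`-modules and
`H = ⊕_n ∏_λ H^(λ)_n` with componentwise `x`-action, `HSL(H) = sup_λ HSL(H^(λ))`. -/
theorem stmt19 {R : Type*} [CommRing R] (p : ℕ) [Fact p.Prime] [CharP R p]
    {Λ : Type*} [Nonempty Λ] {M : Λ → ℕ → Type*}
    [∀ l n, AddCommGroup (M l n)] [∀ l n, Module R (M l n)]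
    (x : ∀ l n, M l n →+ M l (n + 1))
    (hx : ∀ (l : Λ) (n : ℕ) (r : R) (m : M l n), x l n (r • m) = r ^ p • x l n m) :
    HSL (piX x) = ⨆ l : Λ, HSL (x l) := by
  apply le_antisymm
  · rcases eq_top_or_lt_top (⨆ l : Λ, HSL (x l)) with h | h
    · rw [h]; exact le_top
    · obtain ⟨E, hE⟩ := WithTop.ne_top_iff_exists.mp h.ne
      have hw : ∀ l (n : ℕ) (m : M l n),
          (∃ k : ℕ, 1 ≤ k ∧ xIter (x l) n k m = 0) → xIter (x l) n E m = 0 := by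
        intro l
        have h1 : HSL (x l) < ((E : ℕ∞) + 1) := by
          calc HSL (x l) ≤ ⨆ l : Λ, HSL (x l) := le_iSup (fun l => HSL (x l)) l
          _ = (E : ℕ∞) := hE.symm
          _ < (E : ℕ∞) + 1 := by
              exact_mod_cast (Nat.cast_lt (α := ℕ∞)).mpr (Nat.lt_succ_self E)
        obtain ⟨a, ⟨e', rfl, he'⟩, ha⟩ := sInf_lt_iff.mp h1
        have he'E : e' ≤ E := by
          have : ((e' : ℕ∞)) < ((E + 1 : ℕ) : ℕ∞) := by exact_mod_cast ha
          exact Nat.lt_succ_iff.mp (Nat.cast_lt.mp this)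
        exact fun n m hm => xIter_le (x l) he'E (he' n m hm)
      rw [← hE]
      apply sInf_le
      refine ⟨E, rfl, fun n g hg => ?_⟩
      funext l
      rw [xIter_pi]
      apply hw l
      obtain ⟨k, hk1, hk0⟩ := hg
      refine ⟨k, hk1, ?_⟩
      have := congrFun hk0 l
      rwa [xIter_pi] at this
  · apply iSup_le; intro l
    apply le_sInf
    rintro e ⟨e', rfl, he⟩
    apply sInf_le
    refine ⟨e', rfl, fun n m hm => ?_⟩
    obtain ⟨k, hk1, hk0⟩ := hm
    have hsingle : xIter (piX x) n e' (Pi.single l m) = 0 := by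
      apply he
      refine ⟨k, hk1, ?_⟩
      funext l'
      rw [xIter_pi]
      by_cases hl : l' = l
      · subst hl; rw [Pi.single_eq_same, hk0]; rfl
      · rw [Pi.single_eq_of_ne hl, xIter_zero]; rfl
    have := congrFun hsingle l
    rwa [xIter_pi, Pi.single_eq_same] at this
end
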